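/- For every x ∈ ℝ^n, the number 1 is an eigenvalue of (dF/dx)(x) of algebraic multiplicity 1 (equivalently, since the matrix is diagonalizable over ℝ, the eigenspace {w ∈ ℝ^n : (dF/dx)(x) w = w} is one-dimensional), and every eigenvalue λ ∈ ℂ of (dF/dx)(x) with λ ≠ 1 satisfies |λ| < 1. -/

import Mathlib

open Finset Matrix

/-!
Write `u = exp x` and `S = Kᵀ u`. The Jacobian of `F` at `x` is the product of the row
normalizations of `K · diag (b / S)` and `Kᵀ · diag u`, so it is entrywise positive and
row-stochastic, and the claim is Perron–Frobenius for such matrices. Both halves follow from one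
maximum principle: a positively weighted average of points of a disc of radius `r` equals `r`
only if every point equals `r`.
-/

open scoped ComplexOrder

section ConvexCombination

variable {ι : Type*} [Fintype ι] {w : ι → ℝ}

theorem eq_of_sum_mul_eq_of_le {f : ι → ℝ} {c : ℝ} (hw : ∀ k, 0 < w k) (hw1 : ∑ k, w k = 1)
    (hf : ∀ k, f k ≤ c) (h : ∑ k, w k * f k = c) (k : ι) : f k = c := by
  have hsum : ∑ k, w k * f k = ∑ k, w k * c := by rw [h, ← sum_mul, hw1, one_mul]
  exact mul_left_cancel₀ (hw k).ne' <| (sum_eq_sum_iff_of_le fun k _ =>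
    mul_le_mul_of_nonneg_left (hf k) (hw k).le).1 hsum k (mem_univ k)

theorem Complex.eq_of_sum_mul_eq_of_norm_le {z : ι → ℂ} {r : ℝ} (hw : ∀ k, 0 < w k)
    (hw1 : ∑ k, w k = 1) (hz : ∀ k, ‖z k‖ ≤ r) (h : ∑ k, (w k : ℂ) * z k = r) (k : ι) :
    z k = r := by
  have hre : (z k).re = r := by
    refine eq_of_sum_mul_eq_of_le hw hw1 (fun k => (re_le_norm _).trans (hz k)) ?_ k
    simpa [Complex.re_sum] using congrArg Complex.re h
  have hnonneg : 0 ≤ z k := Complex.re_eq_norm.1 <|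
    le_antisymm (re_le_norm _) (hre ▸ hz k)
  rw [Complex.eq_re_of_ofReal_le (z := z k) (r := 0) (by simpa using hnonneg), hre]

end ConvexCombination

theorem Matrix.sum_row_eq_one_of_mulVec_one {ι α : Type*} [Fintype α] {M : Matrix ι α ℝ}
    (hM : M *ᵥ 1 = 1) (i : ι) : ∑ j, M i j = 1 := by
  simpa [mulVec, dotProduct] using congrFun hM i

section PositiveStochastic

variable {ι : Type*} [Fintype ι] {A : Matrix ι ι ℝ}

theorem Matrix.eigenspace_mulVecLin_one_eq_span [Nonempty ι] (hA : ∀ i j, 0 < A i j)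
    (hA1 : A *ᵥ 1 = 1) : Module.End.eigenspace (mulVecLin A) 1 = ℝ ∙ 1 := by
  ext v
  rw [Module.End.mem_eigenspace_iff, one_smul, mulVecLin_apply, Submodule.mem_span_singleton]
  constructor
  · intro hv
    obtain ⟨i₀, hi₀⟩ := Finite.exists_max v
    refine ⟨v i₀, funext fun k => ?_⟩
    have hv_i₀ : ∑ k, A i₀ k * v k = v i₀ := by simpa [mulVec, dotProduct] using congrFun hv i₀
    have := eq_of_sum_mul_eq_of_le (hA i₀) (sum_row_eq_one_of_mulVec_one hA1 i₀) hi₀ hv_i₀ k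
    simpa using this.symm
  · rintro ⟨c, rfl⟩
    rw [mulVec_smul, hA1]

theorem Matrix.finrank_eigenspace_mulVecLin_one [Nonempty ι] (hA : ∀ i j, 0 < A i j)
    (hA1 : A *ᵥ 1 = 1) : Module.finrank ℝ (Module.End.eigenspace (mulVecLin A) 1) = 1 := by
  rw [eigenspace_mulVecLin_one_eq_span hA hA1]
  exact finrank_span_singleton one_ne_zero

theorem Matrix.norm_lt_one_of_mulVec_eq_smul (hA : ∀ i j, 0 < A i j) (hA1 : A *ᵥ 1 = 1)
    {lam : ℂ} (hlam : lam ≠ 1) {v : ι → ℂ} (hv0 : v ≠ 0)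
    (hv : (A.map (fun r => (r : ℂ))) *ᵥ v = lam • v) : ‖lam‖ < 1 := by
  obtain ⟨k, hk⟩ := Function.ne_iff.1 hv0
  have : Nonempty ι := ⟨k⟩
  obtain ⟨i₀, hi₀⟩ := Finite.exists_max fun k => ‖v k‖
  set M := ‖v i₀‖
  have hM : 0 < M := (norm_pos_iff.2 hk).trans_le (hi₀ k)
  have hrow := sum_row_eq_one_of_mulVec_one hA1 i₀
  have hev : ∑ k, (A i₀ k : ℂ) * v k = lam * v i₀ := by
    simpa [mulVec, dotProduct] using congrFun hv i₀
  have hle : ‖lam‖ * M ≤ 1 * M := calc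
    ‖lam‖ * M = ‖∑ k, (A i₀ k : ℂ) * v k‖ := by rw [hev, norm_mul]
    _ ≤ ∑ k, A i₀ k * ‖v k‖ :=
      (norm_sum_le _ _).trans_eq (by simp [abs_of_pos (hA _ _)])
    _ ≤ ∑ k, A i₀ k * M := sum_le_sum fun k _ => mul_le_mul_of_nonneg_left (hi₀ k) (hA _ _).le
    _ = 1 * M := by rw [← sum_mul, hrow]
  refine (le_of_mul_le_mul_right hle hM).lt_of_ne fun hnorm => hlam ?_
  -- Rotating `v` by `u` puts `(A v) i₀` on the positive real axis, where the triangle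
  -- inequality is strict unless all the rotated entries equal `M`.
  have hlv : lam * v i₀ ≠ 0 := by simp [← norm_ne_zero_iff, hnorm, M, hM.ne']
  set u : ℂ := M / (lam * v i₀) with hu_def
  have hu : ‖u‖ = 1 := by simp [u, hnorm, M, hM.ne']
  have hui₀ : u * v i₀ = M := by
    refine Complex.eq_of_sum_mul_eq_of_norm_le (z := fun k => u * v k) (hA i₀) hrow
      (fun k => by rw [norm_mul, hu, one_mul]; exact hi₀ k) ?_ i₀
    simp_rw [mul_left_comm _ u, ← mul_sum, hev, hu_def, div_mul_cancel₀ _ hlv]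
  have hM0 : (M : ℂ) ≠ 0 := by exact_mod_cast hM.ne'
  have hM_eq : (M : ℂ) = lam * M := calc
    (M : ℂ) = u * (lam * v i₀) := (div_mul_cancel₀ _ hlv).symm
    _ = lam * M := by rw [mul_left_comm, hui₀]
  exact mul_right_cancel₀ hM0 (by rw [one_mul, ← hM_eq])

end PositiveStochastic

section RowNormalize

variable {α β : Type*} [Fintype β]

noncomputable def Matrix.rowNormalize (M : Matrix α β ℝ) : Matrix α β ℝ :=
  fun i j => M i j / ∑ j', M i j'

theorem Matrix.rowNormalize_pos [Nonempty β] {M : Matrix α β ℝ} (hM : ∀ i j, 0 < M i j)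
    (i : α) (j : β) : 0 < M.rowNormalize i j :=
  div_pos (hM i j) (sum_pos (fun j _ => hM i j) univ_nonempty)

theorem Matrix.rowNormalize_mulVec_one {M : Matrix α β ℝ} (hM : ∀ i, ∑ j, M i j ≠ 0) :
    M.rowNormalize *ᵥ 1 = 1 := by
  ext i
  simp [mulVec, dotProduct, rowNormalize, ← sum_div, hM i]

end RowNormalize

theorem Matrix.mul_apply_pos {α β γ : Type*} [Fintype β] [Nonempty β] {A : Matrix α β ℝ}
    {B : Matrix β γ ℝ} (hA : ∀ i j, 0 < A i j) (hB : ∀ i j, 0 < B i j) (i : α) (k : γ) :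
    0 < (A * B) i k :=
  sum_pos (fun j _ => mul_pos (hA i j) (hB j k)) univ_nonempty

open Real

section Sinkhorn

variable {ι κ : Type*} [Fintype ι]

theorem hasFDerivAt_sum_mul_exp (c : ι → ℝ) (x : ι → ℝ) :
    HasFDerivAt (fun y : ι → ℝ => ∑ i, c i * exp (y i))
      (∑ i, (c i * exp (x i)) • (ContinuousLinearMap.proj i : (ι → ℝ) →L[ℝ] ℝ)) x := by
  refine HasFDerivAt.fun_sum fun i _ => ?_
  rw [← smul_smul]
  exact ((hasDerivAt_exp (x i)).comp_hasFDerivAt x (hasFDerivAt_apply (𝕜 := ℝ) i x)).const_mul (c i)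

theorem sum_mul_exp_pos [Nonempty ι] {K : Matrix ι κ ℝ} (hK : ∀ i j, 0 < K i j) (x : ι → ℝ)
    (j : κ) : 0 < ∑ i, K i j * exp (x i) :=
  sum_pos (fun i _ => mul_pos (hK i j) (exp_pos _)) univ_nonempty

variable [Fintype κ]

noncomputable def sinkhornMap (a : ι → ℝ) (b : κ → ℝ) (K : Matrix ι κ ℝ) (x : ι → ℝ) (i : ι) : ℝ :=
  log (a i) - log (∑ j, K i j * (b j / ∑ i', K i' j * exp (x i')))

noncomputable def sinkhornJacobian [DecidableEq ι] [DecidableEq κ] (b : κ → ℝ)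
    (K : Matrix ι κ ℝ) (x : ι → ℝ) : Matrix ι ι ℝ :=
  (K * diagonal fun j => b j / ∑ i, K i j * exp (x i)).rowNormalize *
    (Kᵀ * diagonal fun i => exp (x i)).rowNormalize

theorem sum_mul_div_sum_mul_exp_pos [Nonempty ι] [Nonempty κ] {b : κ → ℝ} {K : Matrix ι κ ℝ}
    (hb : ∀ j, 0 < b j) (hK : ∀ i j, 0 < K i j) (x : ι → ℝ) (i : ι) :
    0 < ∑ j, K i j * (b j / ∑ i', K i' j * exp (x i')) :=
  sum_pos (fun j _ => mul_pos (hK i j) (div_pos (hb j) (sum_mul_exp_pos hK x j))) univ_nonempty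

variable [DecidableEq ι] [DecidableEq κ] [Nonempty ι] [Nonempty κ] {b : κ → ℝ}
  {K : Matrix ι κ ℝ}

theorem fderiv_sinkhornMap_apply_single (a : ι → ℝ) (hb : ∀ j, 0 < b j)
    (hK : ∀ i j, 0 < K i j) (x : ι → ℝ) (i k : ι) :
    fderiv ℝ (sinkhornMap a b K) x (Pi.single k 1) i = sinkhornJacobian b K x i k := by
  have hS := sum_mul_exp_pos hK x
  have hG := sum_mul_div_sum_mul_exp_pos hb hK x
  have hterm := fun i j => (((hasDerivAt_inv (hS j).ne').comp_hasFDerivAt x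
    (hasFDerivAt_sum_mul_exp (fun i' => K i' j) x)).const_mul (b j)).const_mul (K i j)
  have hderiv : ∀ i, HasFDerivAt (fun y => sinkhornMap a b K y i) _ x := fun i =>
    ((HasFDerivAt.fun_sum fun j _ => hterm i j).log (hG i).ne').const_sub _
  rw [(hasFDerivAt_pi.2 hderiv).fderiv, sinkhornJacobian, mul_apply]
  simp only [rowNormalize, mul_diagonal, transpose_apply]
  simp only [Function.comp_apply, neg_smul, smul_neg, sum_neg_distrib, neg_neg,
    ContinuousLinearMap.coe_pi', _root_.smul_apply, _root_.sum_apply,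
    ContinuousLinearMap.proj_apply, Pi.single_apply, smul_eq_mul, mul_ite, mul_one, mul_zero,
    sum_ite_eq', mem_univ, if_true, mul_sum]
  refine sum_congr rfl fun l _ => ?_
  have := (hS l).ne'
  field_simp

theorem sinkhornJacobian_pos (hb : ∀ j, 0 < b j) (hK : ∀ i j, 0 < K i j) (x : ι → ℝ)
    (i k : ι) : 0 < sinkhornJacobian b K x i k := by
  refine mul_apply_pos (rowNormalize_pos fun i j => ?_) (rowNormalize_pos fun j k => ?_) i k
  · rw [mul_diagonal]
    exact mul_pos (hK i j) (div_pos (hb j) (sum_mul_exp_pos hK x j))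
  · rw [mul_diagonal, transpose_apply]
    exact mul_pos (hK k j) (exp_pos _)

theorem sinkhornJacobian_mulVec_one (hb : ∀ j, 0 < b j) (hK : ∀ i j, 0 < K i j)
    (x : ι → ℝ) : sinkhornJacobian b K x *ᵥ 1 = 1 := by
  rw [sinkhornJacobian, ← mulVec_mulVec, rowNormalize_mulVec_one, rowNormalize_mulVec_one]
  · simpa [mul_diagonal] using fun i => (sum_mul_div_sum_mul_exp_pos hb hK x i).ne'
  · simpa [mul_diagonal] using fun j => (sum_mul_exp_pos hK x j).ne'

end Sinkhorn

theorem sinkhorn_jacobian_spectrum_general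
    (n m : ℕ) (hn : 0 < n) (hm : 0 < m)
    (a : Fin n → ℝ) (b : Fin m → ℝ) (K : Matrix (Fin n) (Fin m) ℝ)
    (hb_pos : ∀ j, 0 < b j)
    (hK_pos : ∀ i j, 0 < K i j)
    (F : (Fin n → ℝ) → Fin n → ℝ)
    (hF : ∀ x i, F x i = Real.log (a i) -
      Real.log (∑ j, K i j * (b j / ∑ i', K i' j * Real.exp (x i'))))
    (J : (Fin n → ℝ) → Matrix (Fin n) (Fin n) ℝ)
    (hJ : ∀ x j i, J x j i = fderiv ℝ F x (Pi.single i 1) j) :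
    ∀ x : Fin n → ℝ,
      (Module.finrank ℝ
        (Module.End.eigenspace (Matrix.mulVecLin (J x)) (1 : ℝ)) = 1) ∧
      (∀ lam : ℂ, lam ≠ 1 →
        (∃ v : Fin n → ℂ, v ≠ 0 ∧
          ((J x).map (fun r => (r : ℂ))).mulVec v = lam • v) →
        ‖lam‖ < 1) := by
  intro x
  have : Nonempty (Fin n) := Fin.pos_iff_nonempty.1 hn
  have : Nonempty (Fin m) := Fin.pos_iff_nonempty.1 hm
  obtain rfl : F = sinkhornMap a b K := funext fun x => funext (hF x)
  have hJx : J x = sinkhornJacobian b K x := by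
    ext i k
    rw [hJ, fderiv_sinkhornMap_apply_single a hb_pos hK_pos]
  have hpos := sinkhornJacobian_pos hb_pos hK_pos x
  have hstoch := sinkhornJacobian_mulVec_one hb_pos hK_pos x
  rw [hJx]
  exact ⟨finrank_eigenspace_mulVecLin_one hpos hstoch, fun lam hlam ⟨v, hv0, hv⟩ =>
    norm_lt_one_of_mulVec_eq_smul hpos hstoch hlam hv0 hv⟩

/-- Spectral properties of the Jacobian of the Sinkhorn map `F`: the eigenvalue `1`
has a one-dimensional eigenspace (equivalently, algebraic multiplicity `1`, since the
matrix is diagonalizable over `ℝ`), and every complex eigenvalue `λ ≠ 1` satisfies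
`|λ| < 1`. -/
theorem sinkhorn_jacobian_spectrum
    (n m : ℕ) (hn : 0 < n) (hm : 0 < m)
    (a : Fin n → ℝ) (b : Fin m → ℝ) (K : Matrix (Fin n) (Fin m) ℝ)
    (ha_pos : ∀ i, 0 < a i) (ha_sum : ∑ i, a i = 1)
    (hb_pos : ∀ j, 0 < b j) (hb_sum : ∑ j, b j = 1)
    (hK_pos : ∀ i j, 0 < K i j)
    (F : (Fin n → ℝ) → Fin n → ℝ)
    (hF : ∀ x i, F x i = Real.log (a i) -
      Real.log (∑ j, K i j * (b j / ∑ i', K i' j * Real.exp (x i'))))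
    (J : (Fin n → ℝ) → Matrix (Fin n) (Fin n) ℝ)
    (hJ : ∀ x j i, J x j i = fderiv ℝ F x (Pi.single i 1) j) :
    ∀ x : Fin n → ℝ,
      (Module.finrank ℝ
        (Module.End.eigenspace (Matrix.mulVecLin (J x)) (1 : ℝ)) = 1) ∧
      (∀ lam : ℂ, lam ≠ 1 →
        (∃ v : Fin n → ℂ, v ≠ 0 ∧
          ((J x).map (fun r => (r : ℂ))).mulVec v = lam • v) →
        ‖lam‖ < 1) :=
  sinkhorn_jacobian_spectrum_general n m hn hm a b K hb_pos hK_pos F hF J hJ
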